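/- With Ω_B = tr_S(P_R/d_R) the bath reduced state of the maximally mixed state on H_R ⊆ H_S ⊗ H_B, the purity satisfies tr(Ω_B²) ≤ d_S/d_R; equivalently the effective dimension d_B^eff = 1/tr(Ω_B²) satisfies d_B^eff ≥ d_R/d_S. -/

import Mathlib

open Matrix MeasureTheory
open scoped ComplexOrder RealInnerProductSpace
noncomputable def traceNorm {n : Type*} [Fintype n] [DecidableEq n] (A : Matrix n n ℂ) : ℝ :=
  ((Matrix.posSemidef_conjTranspose_mul_self A).1.eigenvectorUnitary *
    Matrix.diagonal (((↑) : ℝ → ℂ) ∘ Real.sqrt ∘ (Matrix.posSemidef_conjTranspose_mul_self A).1.eigenvalues) *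
    (star (Matrix.posSemidef_conjTranspose_mul_self A).1.eigenvectorUnitary : Matrix n n ℂ)).trace.re
noncomputable def hsNorm {n : Type*} [Fintype n] [DecidableEq n] (A : Matrix n n ℂ) : ℝ :=
  Real.sqrt ((Aᴴ * A).trace.re)
noncomputable def opNorm {n : Type*} [Fintype n] [DecidableEq n] (A : Matrix n n ℂ) : ℝ :=
  ‖Matrix.toEuclideanCLM (𝕜 := ℂ) A‖
noncomputable def ptraceB {s b : Type*} [Fintype b] (ρ : Matrix (s × b) (s × b) ℂ) : Matrix s s ℂ :=
  fun i j => ∑ k, ρ (i, k) (j, k)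
noncomputable def ptraceS {s b : Type*} [Fintype s] (ρ : Matrix (s × b) (s × b) ℂ) : Matrix b b ℂ :=
  fun i j => ∑ k, ρ (k, i) (k, j)
noncomputable def outer {n : Type*} (φ : n → ℂ) : Matrix n n ℂ :=
  fun i j => φ i * (starRingEnd ℂ) (φ j)

/-! For the normalised projection `ρ = P / d_R` we have `tr ρ² = tr P / d_R² = 1 / d_R`, as the
trace of an idempotent is its rank. For Hermitian matrices `tr A² = ∑ |A_ij|²`, and each entry of
`tr_S ρ` is a sum of `d_S` entries of `ρ`, so Cauchy–Schwarz gives `tr (tr_S ρ)² ≤ d_S tr ρ²`.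
The purity is positive because `tr (tr_S ρ) = 1`, and inverting yields the effective dimension. -/

theorem Matrix.trace_eq_rank_of_isIdempotentElem {K n : Type*} [Field K] [Fintype n]
    [DecidableEq n] {P : Matrix n n K} (hP : IsIdempotentElem P) : P.trace = P.rank := by
  have hlin : IsIdempotentElem P.mulVecLin := by
    rw [IsIdempotentElem, Module.End.mul_eq_comp, ← Matrix.mulVecLin_mul, hP.eq]
  rw [Matrix.rank, ← (LinearMap.IsIdempotentElem.isProj_range _ hlin).trace,
    ← Matrix.toLin'_apply', Matrix.trace_toLin'_eq]

section MaximallyMixed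

variable {K n : Type*} [Field K] [Fintype n] [DecidableEq n] {P : Matrix n n K}

theorem Matrix.trace_inv_rank_smul_of_isIdempotentElem [CharZero K] (hP : IsIdempotentElem P)
    (h0 : P.rank ≠ 0) : ((P.rank : K)⁻¹ • P).trace = 1 := by
  rw [Matrix.trace_smul, Matrix.trace_eq_rank_of_isIdempotentElem hP, smul_eq_mul,
    inv_mul_cancel₀ (by exact_mod_cast h0)]

theorem Matrix.trace_inv_rank_smul_mul_self_of_isIdempotentElem (hP : IsIdempotentElem P) :
    ((P.rank : K)⁻¹ • P * ((P.rank : K)⁻¹ • P)).trace = (P.rank : K)⁻¹ := by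
  rw [Matrix.smul_mul, Matrix.mul_smul, hP.eq, smul_smul, Matrix.trace_smul,
    Matrix.trace_eq_rank_of_isIdempotentElem hP, smul_eq_mul]
  simpa using mul_self_mul_inv (P.rank : K)⁻¹

end MaximallyMixed

theorem Matrix.IsHermitian.re_trace_mul_self {n : Type*} [Fintype n] {A : Matrix n n ℂ}
    (hA : A.IsHermitian) : (A * A).trace.re = ∑ i, ∑ j, ‖A i j‖ ^ 2 := by
  nth_rewrite 1 [← hA.eq]
  simp only [Matrix.trace, Matrix.diag, Matrix.mul_apply, Matrix.conjTranspose_apply,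
    RCLike.star_def, RCLike.conj_mul, Complex.re_sum]
  norm_cast
  exact Finset.sum_comm

theorem Matrix.IsHermitian.re_trace_mul_self_pos {n : Type*} [Fintype n] {A : Matrix n n ℂ}
    (hA : A.IsHermitian) (h0 : A ≠ 0) : 0 < (A * A).trace.re := by
  obtain ⟨i, j, hij⟩ : ∃ i j, A i j ≠ 0 := by
    by_contra! h
    exact h0 (Matrix.ext h)
  rw [hA.re_trace_mul_self]
  calc 0 < ‖A i j‖ ^ 2 := by positivity
    _ ≤ ∑ j, ‖A i j‖ ^ 2 :=
        Finset.single_le_sum (f := fun j => ‖A i j‖ ^ 2) (fun _ _ => by positivity)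
          (Finset.mem_univ j)
    _ ≤ ∑ i, ∑ j, ‖A i j‖ ^ 2 :=
        Finset.single_le_sum (f := fun i => ∑ j, ‖A i j‖ ^ 2)
          (fun _ _ => by positivity) (Finset.mem_univ i)

section PartialTrace

variable {s b : Type*} [Fintype s]

theorem Matrix.IsHermitian.ptraceS {ρ : Matrix (s × b) (s × b) ℂ} (hρ : ρ.IsHermitian) :
    (ptraceS ρ).IsHermitian := by
  ext i j
  simp only [_root_.ptraceS, Matrix.conjTranspose_apply, star_sum]
  exact Finset.sum_congr rfl fun k _ => hρ.apply (k, i) (k, j)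

variable [Fintype b]

theorem trace_ptraceS (ρ : Matrix (s × b) (s × b) ℂ) : (ptraceS ρ).trace = ρ.trace := by
  simp only [Matrix.trace, Matrix.diag, ptraceS, Fintype.sum_prod_type]
  exact Finset.sum_comm

theorem sum_norm_sq_ptraceS_le (ρ : Matrix (s × b) (s × b) ℂ) :
    ∑ i, ∑ j, ‖ptraceS ρ i j‖ ^ 2 ≤ Fintype.card s * ∑ x, ∑ y, ‖ρ x y‖ ^ 2 := by
  have hentry (i j : b) : ‖ptraceS ρ i j‖ ^ 2 ≤ Fintype.card s * ∑ k, ‖ρ (k, i) (k, j)‖ ^ 2 :=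
    calc ‖ptraceS ρ i j‖ ^ 2 ≤ (∑ k, ‖ρ (k, i) (k, j)‖) ^ 2 := by
          gcongr; exact norm_sum_le _ _
      _ ≤ Fintype.card s * ∑ k, ‖ρ (k, i) (k, j)‖ ^ 2 := sq_sum_le_card_mul_sum_sq
  have hdiag : ∑ i, ∑ j, ∑ k, ‖ρ (k, i) (k, j)‖ ^ 2 ≤ ∑ x, ∑ y, ‖ρ x y‖ ^ 2 :=
    calc ∑ i, ∑ j, ∑ k, ‖ρ (k, i) (k, j)‖ ^ 2 = ∑ k, ∑ i, ∑ j, ‖ρ (k, i) (k, j)‖ ^ 2 :=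
          Finset.sum_comm_cycle
      _ ≤ ∑ k, ∑ i, ∑ l, ∑ j, ‖ρ (k, i) (l, j)‖ ^ 2 := by
          gcongr with k _ i _
          exact Finset.single_le_sum (f := fun l => ∑ j, ‖ρ (k, i) (l, j)‖ ^ 2)
            (fun _ _ => by positivity) (Finset.mem_univ k)
      _ = ∑ x, ∑ y, ‖ρ x y‖ ^ 2 := by simp only [Fintype.sum_prod_type]
  calc ∑ i, ∑ j, ‖ptraceS ρ i j‖ ^ 2
      ≤ ∑ i, ∑ j, Fintype.card s * ∑ k, ‖ρ (k, i) (k, j)‖ ^ 2 :=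
        Finset.sum_le_sum fun i _ => Finset.sum_le_sum fun j _ => hentry i j
    _ = Fintype.card s * ∑ i, ∑ j, ∑ k, ‖ρ (k, i) (k, j)‖ ^ 2 := by simp only [Finset.mul_sum]
    _ ≤ Fintype.card s * ∑ x, ∑ y, ‖ρ x y‖ ^ 2 := by gcongr

theorem re_trace_ptraceS_mul_self_le {ρ : Matrix (s × b) (s × b) ℂ} (hρ : ρ.IsHermitian) :
    (ptraceS ρ * ptraceS ρ).trace.re ≤ Fintype.card s * (ρ * ρ).trace.re := by
  rw [hρ.re_trace_mul_self, hρ.ptraceS.re_trace_mul_self]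
  exact sum_norm_sq_ptraceS_le ρ

end PartialTrace

theorem stmt_10_general (dS dB dR : ℕ) (hdR : 0 < dR)
    (P : Matrix (Fin dS × Fin dB) (Fin dS × Fin dB) ℂ)
    (hherm : P.IsHermitian) (hidem : P * P = P) (hrank : P.rank = dR)
    (ΩB : Matrix (Fin dB) (Fin dB) ℂ) (hΩB : ΩB = ptraceS ((dR : ℂ)⁻¹ • P)) :
    (ΩB * ΩB).trace.re ≤ (dS : ℝ) / dR ∧
    (dR : ℝ) / dS ≤ 1 / (ΩB * ΩB).trace.re := by
  subst hrank hΩB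
  set ρ : Matrix (Fin dS × Fin dB) (Fin dS × Fin dB) ℂ := (P.rank : ℂ)⁻¹ • P
  have hρ : ρ.IsHermitian := hherm.smul (by simp [IsSelfAdjoint])
  have hΩ : ptraceS ρ ≠ 0 := by
    intro h
    have htr := trace_ptraceS ρ
    rw [h, Matrix.trace_zero, Matrix.trace_inv_rank_smul_of_isIdempotentElem hidem hdR.ne'] at htr
    exact zero_ne_one htr
  have hpurity : (ptraceS ρ * ptraceS ρ).trace.re ≤ dS / P.rank :=
    calc (ptraceS ρ * ptraceS ρ).trace.re ≤ Fintype.card (Fin dS) * (ρ * ρ).trace.re :=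
          re_trace_ptraceS_mul_self_le hρ
      _ = dS / P.rank := by
          rw [Matrix.trace_inv_rank_smul_mul_self_of_isIdempotentElem hidem, Fintype.card_fin,
            ← Complex.ofReal_natCast, ← Complex.ofReal_inv, Complex.ofReal_re, div_eq_mul_inv]
  exact ⟨hpurity, one_div_div (dS : ℝ) P.rank ▸
    one_div_le_one_div_of_le (hρ.ptraceS.re_trace_mul_self_pos hΩ) hpurity⟩

/-- The purity of Ω_B = tr_S(P_R/d_R) satisfies tr(Ω_B²) ≤ d_S/d_R; equivalently
the effective dimension d_B^eff = 1/tr(Ω_B²) satisfies d_B^eff ≥ d_R/d_S. -/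
theorem stmt_10 (dS dB dR : ℕ) (hdS : 0 < dS) (hdR : 0 < dR)
    (P : Matrix (Fin dS × Fin dB) (Fin dS × Fin dB) ℂ)
    (hherm : P.IsHermitian) (hidem : P * P = P) (hrank : P.rank = dR)
    (ΩB : Matrix (Fin dB) (Fin dB) ℂ) (hΩB : ΩB = ptraceS ((dR : ℂ)⁻¹ • P)) :
    (ΩB * ΩB).trace.re ≤ (dS : ℝ) / dR ∧
    (dR : ℝ) / dS ≤ 1 / (ΩB * ΩB).trace.re :=
  stmt_10_general dS dB dR hdR P hherm hidem hrank ΩB hΩB
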